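/- arXiv:1610.04571 — 6 statements merged into one kernel-verified Lean document; each statement's English description precedes it below -/
import Mathlib

section
/- For every Young diagram μ, the contents of the addable cells of μ are pairwise distinct integers x_1 < x_2 < ... < x_d, the contents of the removable cells are pairwise distinct integers y_1 < ... < y_{d-1}, and these two sequences interlace: x_1 < y_1 < x_2 < y_2 < ... < y_{d-1} < x_d. -/
/-- A cell `c ∉ μ` is *addable* for the Young diagram `μ` if adding it to `μ`
again yields a Young diagram. -/
def YoungDiagram.IsAddable (μ : YoungDiagram) (c : ℕ × ℕ) : Prop :=
  c ∉ μ ∧ ∃ ν : YoungDiagram, ν.cells = insert c μ.cells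

/-- A cell `c ∈ μ` is *removable* for the Young diagram `μ` if deleting it from `μ`
again yields a Young diagram. -/
def YoungDiagram.IsRemovable (μ : YoungDiagram) (c : ℕ × ℕ) : Prop :=
  c ∈ μ ∧ ∃ ν : YoungDiagram, ν.cells = μ.cells.erase c

/-- The content of a cell `(i, j)` is `j - i`. -/
def cellContent (c : ℕ × ℕ) : ℤ := (c.2 : ℤ) - (c.1 : ℤ)

open YoungDiagram

lemma isAddable_iff (μ : YoungDiagram) (i j : ℕ) :
    μ.IsAddable (i, j) ↔ j = μ.rowLen i ∧ (i = 0 ∨ μ.rowLen i < μ.rowLen (i - 1)) := by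
  constructor
  · rintro ⟨hnm, ν, hν⟩
    have hc : (i, j) ∈ ν := by rw [← mem_cells, hν]; exact Finset.mem_insert_self _ _
    have hmem : ∀ c : ℕ × ℕ, c ≤ (i, j) → c ≠ (i, j) → c ∈ μ := by
      intro c hle hne
      have : c ∈ ν := ν.isLowerSet hle hc
      rw [← mem_cells, hν, Finset.mem_insert] at this
      tauto
    have h1 : ¬ j < μ.rowLen i := fun h => hnm (mem_iff_lt_rowLen.mpr h)
    have hj : j = μ.rowLen i := by
      rcases Nat.eq_zero_or_pos j with h0 | h0
      · omega
      · have := hmem (i, j - 1) (by constructor <;> simp <;> omega) (by simp; omega)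
        rw [mem_iff_lt_rowLen] at this
        omega
    refine ⟨hj, ?_⟩
    rcases Nat.eq_zero_or_pos i with h0 | h0
    · exact Or.inl h0
    · right
      have := hmem (i - 1, j) (by constructor <;> simp <;> omega) (by simp; omega)
      rw [mem_iff_lt_rowLen] at this
      omega
  · rintro ⟨rfl, hd⟩
    have hnm : (i, μ.rowLen i) ∉ μ := by simp [mem_iff_lt_rowLen]
    refine ⟨hnm, ⟨insert (i, μ.rowLen i) μ.cells, ?_⟩, rfl⟩
    intro c2 c1 hle h2
    obtain ⟨a1, b1⟩ := c1
    obtain ⟨a2, b2⟩ := c2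
    rw [Prod.mk_le_mk] at hle
    obtain ⟨hle1, hle2⟩ := hle
    simp only [Finset.coe_insert, Set.mem_insert_iff, mem_cells, Prod.mk.injEq] at h2 ⊢
    rcases h2 with ⟨h2a, h2b⟩ | h
    · obtain rfl : a2 = i := h2a
      obtain rfl : b2 = μ.rowLen a2 := h2b
      by_cases hc : a1 = a2 ∧ b1 = μ.rowLen a2
      · exact Or.inl hc
      right
      rcases Nat.lt_or_ge a1 a2 with h1 | h1
      · have hi0 : a2 ≠ 0 := by omega
        have hlt : μ.rowLen a2 < μ.rowLen (a2 - 1) := by tauto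
        have : (a2 - 1, μ.rowLen a2) ∈ μ := mem_iff_lt_rowLen.mpr hlt
        exact μ.up_left_mem (by omega) hle2 this
      · have h1 : a1 = a2 := le_antisymm hle1 h1
        have h2 : b1 < μ.rowLen a2 := by
          rcases Nat.lt_or_ge b1 (μ.rowLen a2) with h | h
          · exact h
          · exact absurd ⟨h1, le_antisymm hle2 h⟩ hc
        exact mem_iff_lt_rowLen.mpr (h1 ▸ h2)
    · exact Or.inr (μ.up_left_mem hle1 hle2 h)

lemma isRemovable_iff (μ : YoungDiagram) (i j : ℕ) :
    μ.IsRemovable (i, j) ↔ j + 1 = μ.rowLen i ∧ μ.rowLen (i + 1) < μ.rowLen i := by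
  constructor
  · rintro ⟨hm, ν, hν⟩
    have hj : j < μ.rowLen i := mem_iff_lt_rowLen.mp hm
    have hnot : (i, j) ∉ ν := by rw [← mem_cells, hν]; simp
    have key : ∀ c : ℕ × ℕ, (i, j) ≤ c → c ∈ μ → c = (i, j) := by
      intro c hle hc
      by_contra hne
      have : c ∈ ν := by rw [← mem_cells, hν, Finset.mem_erase]; exact ⟨hne, hc⟩
      exact hnot (ν.isLowerSet hle this)
    constructor
    · rcases Nat.lt_or_ge (j + 1) (μ.rowLen i) with h | h
      · have := key (i, j + 1) (by constructor <;> simp) (mem_iff_lt_rowLen.mpr h)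
        simp at this
      · omega
    · rcases Nat.lt_or_ge (μ.rowLen (i + 1)) (μ.rowLen i) with h | h
      · exact h
      · have : (i + 1, j) ∈ μ := mem_iff_lt_rowLen.mpr (by omega)
        have := key (i + 1, j) (by constructor <;> simp) this
        simp at this
  · rintro ⟨hj, hlt⟩
    have hm : (i, j) ∈ μ := mem_iff_lt_rowLen.mpr (by omega)
    refine ⟨hm, ⟨μ.cells.erase (i, j), ?_⟩, rfl⟩
    intro c2 c1 hle h2
    obtain ⟨a1, b1⟩ := c1
    obtain ⟨a2, b2⟩ := c2
    rw [Prod.mk_le_mk] at hle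
    obtain ⟨hle1, hle2⟩ := hle
    simp only [Finset.coe_erase, Set.mem_diff, mem_cells, Set.mem_singleton_iff,
      Prod.mk.injEq] at h2 ⊢
    obtain ⟨hc2, hne2⟩ := h2
    refine ⟨μ.up_left_mem hle1 hle2 hc2, ?_⟩
    rintro ⟨h2a, h2b⟩
    subst h2a; subst h2b
    have h1 : b2 < μ.rowLen a2 := mem_iff_lt_rowLen.mp hc2
    have h2' : μ.rowLen a2 ≤ μ.rowLen a1 := μ.rowLen_anti _ _ hle1
    have hc21 : a2 = a1 := by
      rcases Nat.lt_or_ge a1 a2 with h | h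
      · have : μ.rowLen a2 ≤ μ.rowLen (a1 + 1) := μ.rowLen_anti _ _ (by omega)
        omega
      · omega
    have hc22 : b2 = b1 := by rw [hc21] at h1; omega
    exact hne2 ⟨hc21, hc22⟩

lemma content_anti (μ : YoungDiagram) {a b : ℕ} (h : a < b) :
    (μ.rowLen b : ℤ) - b < (μ.rowLen a : ℤ) - a := by
  have := μ.rowLen_anti a b h.le
  omega

/-- For every Young diagram `μ`, the contents of the addable cells of `μ` are pairwise
distinct integers `x_1 < x_2 < ... < x_d`, the contents of the removable cells are
pairwise distinct integers `y_1 < ... < y_{d-1}`, and the two sequences interlace: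
`x_1 < y_1 < x_2 < y_2 < ... < y_{d-1} < x_d`. -/
theorem addable_removable_contents_interlace (μ : YoungDiagram) :
    ∃ (d : ℕ) (x : Fin d → ℤ) (y : Fin (d - 1) → ℤ),
      1 ≤ d ∧
      StrictMono x ∧ StrictMono y ∧
      Set.InjOn cellContent {c : ℕ × ℕ | μ.IsAddable c} ∧
      Set.InjOn cellContent {c : ℕ × ℕ | μ.IsRemovable c} ∧
      cellContent '' {c : ℕ × ℕ | μ.IsAddable c} = Set.range x ∧
      cellContent '' {c : ℕ × ℕ | μ.IsRemovable c} = Set.range y ∧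
      ∀ i : Fin (d - 1),
        x ⟨i.1, by have := i.isLt; omega⟩ < y i ∧
        y i < x ⟨i.1 + 1, by have := i.isLt; omega⟩ := by
  classical
  set s : Finset ℕ := (Finset.range (μ.colLen 0 + 1)).filter
    (fun i => i = 0 ∨ μ.rowLen i < μ.rowLen (i - 1)) with hs
  have mem_s : ∀ i : ℕ, i ∈ s ↔ (i = 0 ∨ μ.rowLen i < μ.rowLen (i - 1)) := by
    intro i
    simp only [hs, Finset.mem_filter, Finset.mem_range]
    constructor
    · tauto
    · intro h
      refine ⟨?_, h⟩
      rcases h with rfl | h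
      · omega
      · have h0 : 0 < μ.rowLen (i - 1) := by omega
        have h1 : (i - 1, 0) ∈ μ := mem_iff_lt_rowLen.mpr h0
        rw [mem_iff_lt_colLen] at h1
        omega
  have h0s : 0 ∈ s := (mem_s 0).mpr (Or.inl rfl)
  set d := s.card with hdd
  have hd1 : 1 ≤ d := Finset.card_pos.mpr ⟨0, h0s⟩
  have e : Fin d ≃o {x // x ∈ s} := s.orderIsoOfFin hdd.symm
  obtain ⟨F, hFmono, hFmem, hFsurj, hF0⟩ :
      ∃ F : ℕ → ℕ, (∀ m m', m < m' → m' < d → F m < F m') ∧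
        (∀ m < d, F m ∈ s) ∧ (∀ i ∈ s, ∃ m < d, F m = i) ∧ F 0 = 0 := by
    refine ⟨fun m => if h : m < d then (e ⟨m, h⟩ : ℕ) else 0, ?_, ?_, ?_, ?_⟩
    · intro m m' hmm hm'
      have hm : m < d := hmm.trans hm'
      simp only [dif_pos hm, dif_pos hm']
      exact Subtype.coe_lt_coe.mpr (e.strictMono (by exact Fin.mk_lt_mk.mpr hmm))
    · intro m hm
      simp only [dif_pos hm]
      exact (e ⟨m, hm⟩).2
    · intro i hi
      refine ⟨(e.symm ⟨i, hi⟩ : Fin d).1, (e.symm ⟨i, hi⟩).isLt, ?_⟩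
      simp only [dif_pos (e.symm ⟨i, hi⟩).isLt]
      have : e (e.symm ⟨i, hi⟩) = ⟨i, hi⟩ := e.apply_symm_apply _
      rw [show (⟨(e.symm ⟨i, hi⟩ : Fin d).1, (e.symm ⟨i, hi⟩).isLt⟩ : Fin d)
        = e.symm ⟨i, hi⟩ from Fin.ext rfl, this]
    · have h1 : (e ⟨0, hd1⟩ : ℕ) ≤ (e (e.symm ⟨0, h0s⟩) : ℕ) := by
        have : (⟨0, hd1⟩ : Fin d) ≤ e.symm ⟨0, h0s⟩ := Fin.mk_le_mk.mpr (Nat.zero_le _)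
        exact Subtype.coe_le_coe.mpr (e.monotone this)
      rw [e.apply_symm_apply] at h1
      beta_reduce
      rw [dif_pos (show 0 < d from hd1)]
      exact Nat.le_antisymm (by simpa using h1) (Nat.zero_le _)
  have hFpos : ∀ m, 0 < m → m < d → 0 < F m := by
    intro m h0 hm
    have := hFmono 0 m h0 hm
    omega
  -- characterizations
  have hadd : ∀ i j : ℕ, μ.IsAddable (i, j) ↔ (i ∈ s ∧ j = μ.rowLen i) := by
    intro i j
    rw [isAddable_iff, mem_s]
    tauto
  have hrem : ∀ i j : ℕ, μ.IsRemovable (i, j) ↔ (i + 1 ∈ s ∧ j + 1 = μ.rowLen i) := by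
    intro i j
    rw [isRemovable_iff, mem_s]
    simp only [Nat.add_sub_cancel]
    omega
  refine ⟨d, fun k => (μ.rowLen (F (d - 1 - k.1)) : ℤ) - (F (d - 1 - k.1) : ℤ),
      fun k => (μ.rowLen (F (d - 1 - k.1) - 1) : ℤ) - (F (d - 1 - k.1) : ℤ),
      hd1, ?_, ?_, ?_, ?_, ?_, ?_, ?_⟩
  · -- StrictMono x
    intro k k' hkk
    have hkk' : k.1 < k'.1 := hkk
    have h1 : F (d - 1 - k'.1) < F (d - 1 - k.1) :=
      hFmono _ _ (by have := k'.isLt; omega) (by omega)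
    exact content_anti μ h1
  · -- StrictMono y
    intro k k' hkk
    have hkk' : k.1 < k'.1 := hkk
    have h1 : F (d - 1 - k'.1) < F (d - 1 - k.1) :=
      hFmono _ _ (by have := k'.isLt; omega) (by omega)
    have h2 : μ.rowLen (F (d - 1 - k.1) - 1) ≤ μ.rowLen (F (d - 1 - k'.1) - 1) :=
      μ.rowLen_anti _ _ (by omega)
    simp only
    omega
  · -- InjOn addable
    rintro ⟨i, j⟩ hc ⟨i', j'⟩ hc' heq
    rw [Set.mem_setOf_eq, hadd] at hc hc'
    obtain ⟨his, rfl⟩ := hc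
    obtain ⟨his', rfl⟩ := hc'
    simp only [cellContent] at heq
    have : i = i' := by
      rcases Nat.lt_trichotomy i i' with h | h | h
      · have := content_anti μ h; omega
      · exact h
      · have := content_anti μ h; omega
    subst this
    rfl
  · -- InjOn removable
    rintro ⟨i, j⟩ hc ⟨i', j'⟩ hc' heq
    rw [Set.mem_setOf_eq, hrem] at hc hc'
    obtain ⟨his, hj⟩ := hc
    obtain ⟨his', hj'⟩ := hc'
    simp only [cellContent] at heq
    have : i = i' := by
      rcases Nat.lt_trichotomy i i' with h | h | h
      · have := μ.rowLen_anti i i' h.le; omega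
      · exact h
      · have := μ.rowLen_anti i' i h.le; omega
    subst this
    have : j = j' := by omega
    subst this
    rfl
  · -- image addable
    ext z
    simp only [Set.mem_image, Set.mem_setOf_eq, Set.mem_range]
    constructor
    · rintro ⟨⟨i, j⟩, hc, rfl⟩
      rw [hadd] at hc
      obtain ⟨his, rfl⟩ := hc
      obtain ⟨m, hm, hFm⟩ := hFsurj i his
      refine ⟨⟨d - 1 - m, by omega⟩, ?_⟩
      simp only [cellContent]
      have h1 : d - 1 - (d - 1 - m) = m := by omega
      rw [h1, hFm]
    · rintro ⟨k, rfl⟩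
      refine ⟨(F (d - 1 - k.1), μ.rowLen (F (d - 1 - k.1))), ?_, ?_⟩
      · exact (hadd _ _).mpr ⟨hFmem _ (by have := k.isLt; omega), rfl⟩
      · simp [cellContent]
  · -- image removable
    ext z
    simp only [Set.mem_image, Set.mem_setOf_eq, Set.mem_range]
    constructor
    · rintro ⟨⟨i, j⟩, hc, rfl⟩
      rw [hrem] at hc
      obtain ⟨his, hj⟩ := hc
      obtain ⟨m, hm, hFm⟩ := hFsurj (i + 1) his
      have hm0 : 0 < m := by
        rcases Nat.eq_zero_or_pos m with rfl | h
        · omega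
        · exact h
      refine ⟨⟨d - 1 - m, by omega⟩, ?_⟩
      simp only [cellContent]
      have h1 : d - 1 - (d - 1 - m) = m := by omega
      rw [h1, hFm]
      simp only [Nat.add_sub_cancel]
      omega
    · rintro ⟨k, rfl⟩
      have hm1 : 1 ≤ d - 1 - k.1 := by have := k.isLt; omega
      have hmd : d - 1 - k.1 < d := by omega
      set a := F (d - 1 - k.1) with ha
      have ha0 : 0 < a := hFpos _ hm1 hmd
      have has : a ∈ s := hFmem _ hmd
      have halt : μ.rowLen a < μ.rowLen (a - 1) := by
        rcases (mem_s a).mp has with h | h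
        · omega
        · exact h
      refine ⟨(a - 1, μ.rowLen (a - 1) - 1), ?_, ?_⟩
      · rw [hrem]
        constructor
        · rw [show a - 1 + 1 = a by omega]; exact has
        · omega
      · simp only [cellContent]
        omega
  · -- interlacing
    intro k
    have hk := k.isLt
    have hm1 : 1 ≤ d - 1 - k.1 := by omega
    have hmd : d - 1 - k.1 < d := by omega
    have has : F (d - 1 - k.1) ∈ s := hFmem _ hmd
    have ha0 : 0 < F (d - 1 - k.1) := hFpos _ hm1 hmd
    have halt : μ.rowLen (F (d - 1 - k.1)) < μ.rowLen (F (d - 1 - k.1) - 1) := by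
      rcases (mem_s _).mp has with h | h
      · omega
      · exact h
    constructor
    · simp only
      omega
    · simp only
      have h1 : F (d - 1 - (k.1 + 1)) < F (d - 1 - k.1) := hFmono _ _ (by omega) hmd
      have h2 : μ.rowLen (F (d - 1 - k.1) - 1) ≤ μ.rowLen (F (d - 1 - (k.1 + 1))) :=
        μ.rowLen_anti _ _ (by omega)
      omega
end

section
/- Let d ≥ 1 and let x_1 < y_1 < x_2 < y_2 < ... < y_{d-1} < x_d be integers satisfying (x_1 + ... + x_d) − (y_1 + ... + y_{d-1}) = 0. Then there exists a unique Young diagram μ whose set of addable-cell contents is exactly {x_1, ..., x_d} and whose set of removable-cell contents is exactly {y_1, ..., y_{d-1}}. -/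
namespace Interlace

open YoungDiagram

theorem addable_iff (μ : YoungDiagram) (i j : ℕ) :
    μ.IsAddable (i, j) ↔ j = μ.rowLen i ∧ (i = 0 ∨ μ.rowLen i < μ.rowLen (i - 1)) := by
  constructor
  · rintro ⟨hne, ν, hν⟩
    have hmemν : ∀ p : ℕ × ℕ, p ∈ ν ↔ p = (i, j) ∨ p ∈ μ := by
      intro p; rw [← mem_cells, hν, Finset.mem_insert, mem_cells]
    rw [mem_iff_lt_rowLen, not_lt] at hne
    have hij : (i, j) ∈ ν := (hmemν _).2 (Or.inl rfl)
    have h1 : j = μ.rowLen i := by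
      by_contra hj
      have hlt : μ.rowLen i < j := lt_of_le_of_ne hne (Ne.symm hj)
      have h2 : (i, μ.rowLen i) ∈ ν := ν.up_left_mem le_rfl hlt.le hij
      rcases (hmemν _).1 h2 with h | h
      · exact hj (by injection h with _ h; omega)
      · rw [mem_iff_lt_rowLen] at h; omega
    refine ⟨h1, ?_⟩
    rcases Nat.eq_zero_or_pos i with h0 | h0
    · exact Or.inl h0
    right
    have h2 : (i - 1, j) ∈ ν := ν.up_left_mem (by omega) le_rfl hij
    rcases (hmemν _).1 h2 with h | h
    · exfalso; injection h with h _; omega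
    · rw [mem_iff_lt_rowLen] at h; omega
  · rintro ⟨rfl, hcorner⟩
    have hne : (i, μ.rowLen i) ∉ μ := by rw [mem_iff_lt_rowLen]; omega
    refine ⟨hne, ⟨insert (i, μ.rowLen i) μ.cells, ?_⟩, rfl⟩
    intro p q hle hp
    simp only [Finset.coe_insert, Set.mem_insert_iff, Finset.mem_coe, mem_cells] at hp ⊢
    obtain ⟨q1, q2⟩ := q
    obtain ⟨hq1, hq2⟩ := Prod.mk_le_mk.1 hle
    rcases hp with rfl | hp
    · -- p = (i, rowLen i), q ≤ p
      rcases eq_or_lt_of_le hq1 with rfl | hq1lt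
      · rcases eq_or_lt_of_le hq2 with rfl | hq2lt
        · exact Or.inl rfl
        · right; rw [mem_iff_lt_rowLen]; exact hq2lt
      · right; rw [mem_iff_lt_rowLen]
        have : μ.rowLen (i - 1) ≤ μ.rowLen q1 := μ.rowLen_anti _ _ (by omega)
        rcases hcorner with h0 | hlt
        · omega
        · omega
    · exact Or.inr (μ.up_left_mem hq1 hq2 hp)

theorem removable_iff (μ : YoungDiagram) (i j : ℕ) :
    μ.IsRemovable (i, j) ↔ j + 1 = μ.rowLen i ∧ μ.rowLen (i + 1) < μ.rowLen i := by
  constructor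
  · rintro ⟨hmem, ν, hν⟩
    have hmemν : ∀ p : ℕ × ℕ, p ∈ ν ↔ p ≠ (i, j) ∧ p ∈ μ := by
      intro p; rw [← mem_cells, hν, Finset.mem_erase, mem_cells]
    have hj : j < μ.rowLen i := mem_iff_lt_rowLen.1 hmem
    have h1 : j + 1 = μ.rowLen i := by
      by_contra hne
      have hj1 : (i, j + 1) ∈ μ := mem_iff_lt_rowLen.2 (by omega)
      have : (i, j) ∈ ν := ν.up_left_mem le_rfl (by omega)
        ((hmemν (i, j + 1)).2 ⟨by simp, hj1⟩)
      exact ((hmemν _).1 this).1 rfl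
    refine ⟨h1, ?_⟩
    by_contra hle
    have hle' : μ.rowLen i ≤ μ.rowLen (i + 1) := by omega
    have hj1 : (i + 1, j) ∈ μ := mem_iff_lt_rowLen.2 (by omega)
    have : (i, j) ∈ ν := ν.up_left_mem (by omega) le_rfl
      ((hmemν (i + 1, j)).2 ⟨by simp, hj1⟩)
    exact ((hmemν _).1 this).1 rfl
  · rintro ⟨hj, hcorner⟩
    have hmem : (i, j) ∈ μ := mem_iff_lt_rowLen.2 (by omega)
    refine ⟨hmem, ⟨μ.cells.erase (i, j), ?_⟩, rfl⟩
    intro p q hle hp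
    simp only [Finset.coe_erase, Set.mem_diff, Finset.mem_coe, mem_cells,
      Set.mem_singleton_iff] at hp ⊢
    obtain ⟨q1, q2⟩ := q
    obtain ⟨p1, p2⟩ := p
    obtain ⟨hq1, hq2⟩ := Prod.mk_le_mk.1 hle
    obtain ⟨hpmem, hpne⟩ := hp
    refine ⟨μ.up_left_mem hq1 hq2 hpmem, ?_⟩
    intro hq
    injection hq with e1 e2
    have hpr : p2 < μ.rowLen p1 := mem_iff_lt_rowLen.1 hpmem
    rcases eq_or_ne p1 i with hpi | hpi
    · have hne2 : p2 ≠ j := fun h => hpne (by rw [hpi, h])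
      rw [hpi] at hpr
      omega
    · have : μ.rowLen p1 ≤ μ.rowLen (i + 1) := μ.rowLen_anti _ _ (by omega)
      omega

noncomputable def sSeq (μ : YoungDiagram) (i : ℕ) : ℤ := (μ.rowLen i : ℤ) - i - 1

theorem sSeq_strictAnti (μ : YoungDiagram) : StrictAnti (sSeq μ) := by
  intro a b hab
  have := μ.rowLen_anti a b hab.le
  simp only [sSeq]
  omega

theorem mem_addContents (μ : YoungDiagram) (c : ℤ) :
    c ∈ cellContent '' {p : ℕ × ℕ | μ.IsAddable p} ↔
      (c - 1 ∈ Set.range (sSeq μ) ∧ c ∉ Set.range (sSeq μ)) := by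
  constructor
  · rintro ⟨⟨i, j⟩, hp, rfl⟩
    obtain ⟨rfl, hcorner⟩ := (addable_iff μ i j).1 hp
    have hcc : cellContent (i, μ.rowLen i) = sSeq μ i + 1 := by
      simp only [cellContent, sSeq]; ring
    rw [hcc]
    constructor
    · exact ⟨i, by ring⟩
    · rintro ⟨m, hm⟩
      -- sSeq μ m = sSeq μ i + 1
      have hmi : m < i := by
        by_contra h
        have := (sSeq_strictAnti μ).antitone (not_lt.1 h)
        omega
      have h1 : sSeq μ (i - 1) ≤ sSeq μ m :=
        (sSeq_strictAnti μ).antitone (by omega)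
      have hi0 : i ≠ 0 := by omega
      have hcor : μ.rowLen i < μ.rowLen (i - 1) := by tauto
      have h2 : sSeq μ (i - 1) ≥ sSeq μ i + 2 := by
        simp only [sSeq]
        omega
      omega
  · rintro ⟨⟨i, hi⟩, hnc⟩
    refine ⟨(i, μ.rowLen i), ?_, ?_⟩
    · rw [Set.mem_setOf_eq, addable_iff]
      refine ⟨rfl, ?_⟩
      rcases Nat.eq_zero_or_pos i with h0 | h0
      · exact Or.inl h0
      right
      by_contra hle
      have heq : μ.rowLen (i - 1) = μ.rowLen i := by
        have := μ.rowLen_anti (i - 1) i (by omega); omega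
      apply hnc
      refine ⟨i - 1, ?_⟩
      simp only [sSeq] at hi ⊢
      have : ((i - 1 : ℕ) : ℤ) = (i : ℤ) - 1 := by omega
      omega
    · simp only [cellContent, sSeq] at hi ⊢
      omega

theorem mem_remContents (μ : YoungDiagram) (c : ℤ) :
    c ∈ cellContent '' {p : ℕ × ℕ | μ.IsRemovable p} ↔
      (c ∈ Set.range (sSeq μ) ∧ c - 1 ∉ Set.range (sSeq μ)) := by
  constructor
  · rintro ⟨⟨i, j⟩, hp, rfl⟩
    obtain ⟨hj, hcorner⟩ := (removable_iff μ i j).1 hp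
    have hcc : cellContent (i, j) = sSeq μ i := by
      simp only [cellContent, sSeq]; omega
    rw [hcc]
    refine ⟨⟨i, rfl⟩, ?_⟩
    rintro ⟨m, hm⟩
    -- sSeq μ m = sSeq μ i - 1
    have hmi : i < m := by
      by_contra h
      have := (sSeq_strictAnti μ).antitone (not_lt.1 h)
      omega
    have h1 : sSeq μ m ≤ sSeq μ (i + 1) := (sSeq_strictAnti μ).antitone hmi
    have : sSeq μ (i + 1) ≤ sSeq μ i - 2 := by
      simp only [sSeq]
      push_cast
      omega
    omega
  · rintro ⟨⟨i, hi⟩, hnc⟩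
    have hpos : 0 < μ.rowLen i := by
      by_contra h
      have h0 : μ.rowLen i = 0 := by omega
      have h1 : μ.rowLen (i + 1) = 0 := by
        have := μ.rowLen_anti i (i + 1) (by omega); omega
      apply hnc
      refine ⟨i + 1, ?_⟩
      simp only [sSeq, h1] at hi ⊢
      push_cast
      omega
    refine ⟨(i, μ.rowLen i - 1), ?_, ?_⟩
    · rw [Set.mem_setOf_eq, removable_iff]
      refine ⟨by omega, ?_⟩
      by_contra hle
      have heq : μ.rowLen (i + 1) = μ.rowLen i := by
        have := μ.rowLen_anti i (i + 1) (by omega); omega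
      apply hnc
      refine ⟨i + 1, ?_⟩
      simp only [sSeq, heq] at hi ⊢
      push_cast
      omega
    · simp only [cellContent, sSeq] at hi ⊢
      omega

theorem eq_of_sSeq_range_eq (μ ν : YoungDiagram)
    (h : Set.range (sSeq μ) = Set.range (sSeq ν)) : μ = ν := by
  have key : ∀ i, sSeq μ i = sSeq ν i := by
    intro i
    induction i using Nat.strong_induction_on with
    | _ i ih =>
      have h1 : sSeq μ i ∈ Set.range (sSeq ν) := h ▸ Set.mem_range_self i
      have h2 : sSeq ν i ∈ Set.range (sSeq μ) := h.symm ▸ Set.mem_range_self i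
      obtain ⟨j, hj⟩ := h1
      obtain ⟨k, hk⟩ := h2
      have hij : i ≤ j := by
        by_contra hlt
        have e1 := ih j (by omega)
        have e2 := (sSeq_strictAnti μ) (show j < i by omega)
        omega
      have hik : i ≤ k := by
        by_contra hlt
        have e1 := ih k (by omega)
        have e2 := (sSeq_strictAnti ν) (show k < i by omega)
        omega
      have hle1 := (sSeq_strictAnti ν).antitone hij
      have hle2 := (sSeq_strictAnti μ).antitone hik
      omega
  have hrl : ∀ i, μ.rowLen i = ν.rowLen i := by
    intro i
    have := key i
    simp only [sSeq] at this
    omega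
  ext ⟨i, j⟩
  simp only [mem_cells, mem_iff_lt_rowLen, hrl]

section Interlacing

variable {e : ℕ} (x : Fin (e + 1) → ℤ) (y : Fin e → ℤ)

/-- The profile function: `Hf c` counts rows `i` with `rowLen i - i > c`. -/
def Hf (c : ℤ) : ℤ := (∑ k, max (x k - c) 0) - (∑ k, max (y k - c) 0)

theorem maxstep (a c : ℤ) : max (a - c) 0 - max (a - (c + 1)) 0 = if c < a then 1 else 0 := by
  rcases lt_or_ge c a with h | h
  · rw [if_pos h]; omega
  · rw [if_neg (by omega)]; omega

theorem Hf_step (c : ℤ) : Hf x y c - Hf x y (c + 1) =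
    (∑ k, if c < x k then (1 : ℤ) else 0) - (∑ k, if c < y k then (1 : ℤ) else 0) := by
  have hx : (∑ k, max (x k - c) 0) - (∑ k, max (x k - (c + 1)) 0)
      = ∑ k, (if c < x k then (1 : ℤ) else 0) := by
    rw [← Finset.sum_sub_distrib]
    exact Finset.sum_congr rfl fun k _ => maxstep _ _
  have hy : (∑ k, max (y k - c) 0) - (∑ k, max (y k - (c + 1)) 0)
      = ∑ k, (if c < y k then (1 : ℤ) else 0) := by
    rw [← Finset.sum_sub_distrib]
    exact Finset.sum_congr rfl fun k _ => maxstep _ _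
  simp only [Hf]
  omega

variable (hxy : ∀ k : Fin e, x k.castSucc < y k ∧ y k < x k.succ)

include hxy

theorem step_nonneg (c : ℤ) :
    (∑ k, if c < y k then (1 : ℤ) else 0) ≤ (∑ k, if c < x k then (1 : ℤ) else 0) := by
  rw [Fin.sum_univ_succ]
  have h1 : (∑ k : Fin e, if c < y k then (1 : ℤ) else 0)
      ≤ ∑ k : Fin e, if c < x k.succ then (1 : ℤ) else 0 := by
    refine Finset.sum_le_sum fun k _ => ?_
    have := (hxy k).2
    split <;> split <;> omega
  have h0 : (0 : ℤ) ≤ if c < x 0 then (1 : ℤ) else 0 := by positivity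
  calc (∑ k : Fin e, if c < y k then (1 : ℤ) else 0)
      ≤ ∑ k : Fin e, if c < x k.succ then (1 : ℤ) else 0 := h1
    _ ≤ _ := by omega

theorem step_le_one (c : ℤ) :
    (∑ k, if c < x k then (1 : ℤ) else 0) ≤ (∑ k, if c < y k then (1 : ℤ) else 0) + 1 := by
  rw [Fin.sum_univ_castSucc]
  have h1 : (∑ k : Fin e, if c < x k.castSucc then (1 : ℤ) else 0)
      ≤ ∑ k : Fin e, if c < y k then (1 : ℤ) else 0 := by
    refine Finset.sum_le_sum fun k _ => ?_
    have := (hxy k).1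
    split <;> split <;> omega
  have h0 : (if c < x (Fin.last e) then (1 : ℤ) else 0) ≤ 1 := by split <;> omega
  omega

theorem Hf_antitone_step (c : ℤ) : Hf x y (c + 1) ≤ Hf x y c := by
  have := Hf_step x y c
  have := step_nonneg x y hxy c
  omega

theorem Hf_step_le (c : ℤ) : Hf x y c ≤ Hf x y (c + 1) + 1 := by
  have := Hf_step x y c
  have := step_le_one x y hxy c
  omega

theorem Hf_antitone : ∀ c c' : ℤ, c ≤ c' → Hf x y c' ≤ Hf x y c := by
  intro c
  refine Int.le_induction (le_refl _) (fun n hn ih => ?_)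
  exact le_trans (Hf_antitone_step x y hxy n) ih

theorem Hf_sub_le : ∀ c c' : ℤ, c ≤ c' → Hf x y c ≤ Hf x y c' + (c' - c) := by
  intro c
  refine Int.le_induction (by omega) (fun n hn ih => ?_)
  have := Hf_step_le x y hxy n
  omega

theorem hxmono : StrictMono x := by
  rw [Fin.strictMono_iff_lt_succ]
  intro k
  exact lt_trans (hxy k).1 (hxy k).2

theorem Hf_eq_zero {c : ℤ} (hc : x (Fin.last e) ≤ c) : Hf x y c = 0 := by
  have hx : ∀ k : Fin (e + 1), x k ≤ c :=
    fun k => le_trans ((hxmono x y hxy).monotone (Fin.le_last k)) hc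
  have hy : ∀ k : Fin e, y k ≤ c :=
    fun k => le_trans (le_of_lt (lt_of_lt_of_le (hxy k).2 (hx k.succ))) le_rfl
  simp only [Hf]
  rw [Finset.sum_congr rfl fun k _ => max_eq_right (by have := hx k; omega),
    Finset.sum_congr rfl fun k _ => max_eq_right (by have := hy k; omega)]
  simp

theorem Hf_eq_lin (hsum : (∑ k, x k) - (∑ k, y k) = 0) {c : ℤ} (hc : c ≤ x 0) : Hf x y c = -c := by
  have hx : ∀ k : Fin (e + 1), c ≤ x k :=
    fun k => le_trans hc ((hxmono x y hxy).monotone (Fin.zero_le k))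
  have hy : ∀ k : Fin e, c ≤ y k :=
    fun k => le_trans (hx k.castSucc) (le_of_lt (hxy k).1)
  simp only [Hf]
  rw [Finset.sum_congr rfl fun k _ => max_eq_left (by have := hx k; omega),
    Finset.sum_congr rfl fun k _ => max_eq_left (by have := hy k; omega),
    Finset.sum_sub_distrib, Finset.sum_sub_distrib]
  simp only [Finset.sum_const, Finset.card_univ, Fintype.card_fin, nsmul_eq_mul]
  push_cast
  linarith [hsum]

theorem Hf_nonneg (c : ℤ) : 0 ≤ Hf x y c := by
  rcases le_or_gt (x (Fin.last e)) c with h | h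
  · rw [Hf_eq_zero x y hxy h]
  · have := Hf_antitone x y hxy c (x (Fin.last e)) h.le
    rw [Hf_eq_zero x y hxy le_rfl] at this
    omega

theorem Hf_ge_neg (hsum : (∑ k, x k) - (∑ k, y k) = 0) (c : ℤ) : -c ≤ Hf x y c := by
  rcases le_or_gt c (x 0) with h | h
  · rw [Hf_eq_lin x y hxy hsum h]
  · have := Hf_sub_le x y hxy (x 0) c h.le
    rw [Hf_eq_lin x y hxy hsum le_rfl] at this
    omega

theorem ranges_disjoint (k : Fin e) (m : Fin (e + 1)) : y k ≠ x m := by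
  intro h
  rcases le_or_gt m.1 k.1 with hm | hm
  · have h1 : x m ≤ x k.castSucc := (hxmono x y hxy).monotone (by rw [Fin.le_def]; simpa)
    have := (hxy k).1
    omega
  · have h1 : x k.succ ≤ x m := (hxmono x y hxy).monotone (by rw [Fin.le_def]; simpa [Fin.val_succ])
    have := (hxy k).2
    omega

theorem hymono : StrictMono y := by
  intro k k' h
  have h1 : x k.succ ≤ x k'.castSucc :=
    (hxmono x y hxy).monotone (by rw [Fin.le_def]; simp [Fin.val_succ]; exact h)
  exact lt_trans (hxy k).2 (lt_of_le_of_lt h1 (hxy k').1)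

omit hxy in
theorem sum_ind_x_one {c : ℤ} (hinj : Function.Injective x) (m : Fin (e + 1)) (hm : x m = c) :
    (∑ k, if x k = c then (1 : ℤ) else 0) = 1 := by
  rw [Finset.sum_eq_single m]
  · rw [if_pos hm]
  · intro b _ hb
    rw [if_neg]
    intro hbc
    exact hb (hinj (hbc.trans hm.symm))
  · simp

omit hxy in
theorem sum_ind_x_zero {c : ℤ} (hc : c ∉ Set.range x) :
    (∑ k, if x k = c then (1 : ℤ) else 0) = 0 :=
  Finset.sum_eq_zero fun k _ => if_neg fun h => hc ⟨k, h⟩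

omit hxy in
theorem sum_ind_y_one {c : ℤ} (hinj : Function.Injective y) (m : Fin e) (hm : y m = c) :
    (∑ k, if y k = c then (1 : ℤ) else 0) = 1 := by
  rw [Finset.sum_eq_single m]
  · rw [if_pos hm]
  · intro b _ hb
    rw [if_neg]
    intro hbc
    exact hb (hinj (hbc.trans hm.symm))
  · simp

omit hxy in
theorem sum_ind_y_zero {c : ℤ} (hc : c ∉ Set.range y) :
    (∑ k, if y k = c then (1 : ℤ) else 0) = 0 :=
  Finset.sum_eq_zero fun k _ => if_neg fun h => hc ⟨k, h⟩

omit hxy in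
theorem indstep (a c : ℤ) :
    (if c - 1 < a then (1 : ℤ) else 0) - (if c < a then 1 else 0) = if a = c then 1 else 0 := by
  split_ifs <;> omega

omit hxy in
theorem Hf_stepdiff (c : ℤ) :
    (Hf x y (c - 1) - Hf x y c) - (Hf x y c - Hf x y (c + 1))
      = (∑ k, if x k = c then (1 : ℤ) else 0) - (∑ k, if y k = c then (1 : ℤ) else 0) := by
  have h1 := Hf_step x y (c - 1)
  have h2 := Hf_step x y c
  rw [sub_add_cancel] at h1
  have hx : (∑ k, if c - 1 < x k then (1 : ℤ) else 0) - (∑ k, if c < x k then (1 : ℤ) else 0)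
      = ∑ k, (if x k = c then (1 : ℤ) else 0) := by
    rw [← Finset.sum_sub_distrib]
    exact Finset.sum_congr rfl fun k _ => indstep _ _
  have hy : (∑ k, if c - 1 < y k then (1 : ℤ) else 0) - (∑ k, if c < y k then (1 : ℤ) else 0)
      = ∑ k, (if y k = c then (1 : ℤ) else 0) := by
    rw [← Finset.sum_sub_distrib]
    exact Finset.sum_congr rfl fun k _ => indstep _ _
  omega

theorem xpattern (c : ℤ) :
    c ∈ Set.range x ↔ (Hf x y c < Hf x y (c - 1) ∧ ¬ Hf x y (c + 1) < Hf x y c) := by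
  have hs1 : Hf x y c ≤ Hf x y (c - 1) := by
    have := Hf_antitone_step x y hxy (c - 1); rwa [sub_add_cancel] at this
  have hs2 : Hf x y (c - 1) ≤ Hf x y c + 1 := by
    have := Hf_step_le x y hxy (c - 1); rwa [sub_add_cancel] at this
  have hs3 : Hf x y (c + 1) ≤ Hf x y c := Hf_antitone_step x y hxy c
  have hs4 : Hf x y c ≤ Hf x y (c + 1) + 1 := Hf_step_le x y hxy c
  have hsd := Hf_stepdiff x y c
  constructor
  · rintro ⟨m, rfl⟩
    have hx1 : (∑ k, if x k = x m then (1 : ℤ) else 0) = 1 :=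
      sum_ind_x_one x (hxmono x y hxy).injective m rfl
    have hy0 : (∑ k, if y k = x m then (1 : ℤ) else 0) = 0 :=
      sum_ind_y_zero y (by rintro ⟨k, hk⟩; exact ranges_disjoint x y hxy k m hk)
    rw [hx1, hy0] at hsd
    omega
  · rintro ⟨h1, h2⟩
    by_contra hc
    have hx0 : (∑ k, if x k = c then (1 : ℤ) else 0) = 0 := sum_ind_x_zero x hc
    rw [hx0] at hsd
    by_cases hcy : c ∈ Set.range y
    · obtain ⟨m, hm⟩ := hcy
      have := sum_ind_y_one y (hymono x y hxy).injective m hm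
      omega
    · have := sum_ind_y_zero y hcy
      omega

theorem ypattern (c : ℤ) :
    c ∈ Set.range y ↔ (Hf x y (c + 1) < Hf x y c ∧ ¬ Hf x y c < Hf x y (c - 1)) := by
  have hs1 : Hf x y c ≤ Hf x y (c - 1) := by
    have := Hf_antitone_step x y hxy (c - 1); rwa [sub_add_cancel] at this
  have hs2 : Hf x y (c - 1) ≤ Hf x y c + 1 := by
    have := Hf_step_le x y hxy (c - 1); rwa [sub_add_cancel] at this
  have hs3 : Hf x y (c + 1) ≤ Hf x y c := Hf_antitone_step x y hxy c
  have hs4 : Hf x y c ≤ Hf x y (c + 1) + 1 := Hf_step_le x y hxy c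
  have hsd := Hf_stepdiff x y c
  constructor
  · rintro ⟨m, rfl⟩
    have hy1 : (∑ k, if y k = y m then (1 : ℤ) else 0) = 1 :=
      sum_ind_y_one y (hymono x y hxy).injective m rfl
    have hx0 : (∑ k, if x k = y m then (1 : ℤ) else 0) = 0 :=
      sum_ind_x_zero x (by rintro ⟨k, hk⟩; exact ranges_disjoint x y hxy m k hk.symm)
    rw [hy1, hx0] at hsd
    omega
  · rintro ⟨h1, h2⟩
    by_contra hc
    have hy0 : (∑ k, if y k = c then (1 : ℤ) else 0) = 0 := sum_ind_y_zero y hc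
    rw [hy0] at hsd
    by_cases hcx : c ∈ Set.range x
    · obtain ⟨m, hm⟩ := hcx
      have := sum_ind_x_one x (hxmono x y hxy).injective m hm
      omega
    · have := sum_ind_x_zero x hcx
      omega

theorem transfer (μ : YoungDiagram)
    (hA : cellContent '' {p : ℕ × ℕ | μ.IsAddable p} = Set.range x)
    (hR : cellContent '' {p : ℕ × ℕ | μ.IsRemovable p} = Set.range y) :
    ∀ c : ℤ, c ∈ Set.range (sSeq μ) ↔ Hf x y (c + 1) < Hf x y c := by
  have cx : ∀ c : ℤ, c ∈ Set.range x ↔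
      (c - 1 ∈ Set.range (sSeq μ) ∧ c ∉ Set.range (sSeq μ)) := by
    intro c; rw [← hA]; exact mem_addContents μ c
  have cy : ∀ c : ℤ, c ∈ Set.range y ↔
      (c ∈ Set.range (sSeq μ) ∧ c - 1 ∉ Set.range (sSeq μ)) := by
    intro c; rw [← hR]; exact mem_remContents μ c
  have h00 : ((μ.rowLen 0 : ℤ)) ∈ Set.range x := by
    rw [← hA]
    refine ⟨(0, μ.rowLen 0), ?_, ?_⟩
    · rw [Set.mem_setOf_eq, addable_iff]; exact ⟨rfl, Or.inl rfl⟩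
    · simp [cellContent]
  obtain ⟨m0, hm0⟩ := h00
  have htop : ∀ c : ℤ, x (Fin.last e) ≤ c → c ∉ Set.range (sSeq μ) := by
    rintro c hcc ⟨i, hi⟩
    have h1 : sSeq μ i ≤ sSeq μ 0 := (sSeq_strictAnti μ).antitone (Nat.zero_le i)
    have h2 : x m0 ≤ x (Fin.last e) := (hxmono x y hxy).monotone (Fin.le_last m0)
    simp only [sSeq, Nat.cast_zero] at h1 hi
    omega
  have htopH : ∀ c : ℤ, x (Fin.last e) ≤ c → ¬ Hf x y (c + 1) < Hf x y c := by
    intro c hcc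
    rw [Hf_eq_zero x y hxy hcc, Hf_eq_zero x y hxy (by omega)]
    omega
  have main : ∀ n : ℕ, ((x (Fin.last e) - n) ∈ Set.range (sSeq μ) ↔
      Hf x y ((x (Fin.last e) - n) + 1) < Hf x y (x (Fin.last e) - n)) := by
    intro n
    induction n with
    | zero =>
      simp only [Nat.cast_zero, sub_zero]
      exact iff_of_false (htop _ le_rfl) (htopH _ le_rfl)
    | succ n ih =>
      set c : ℤ := x (Fin.last e) - ((n + 1 : ℕ) : ℤ) with hc
      have hc1 : c + 1 = x (Fin.last e) - (n : ℤ) := by push_cast [hc]; ring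
      rw [← hc1] at ih
      by_cases hx1 : c + 1 ∈ Set.range x
      · have h1 := (cx (c + 1)).1 hx1
        have h2 := (xpattern x y hxy (c + 1)).1 hx1
        rw [add_sub_cancel_right] at h1 h2
        exact iff_of_true h1.1 h2.1
      · by_cases hy1 : c + 1 ∈ Set.range y
        · have h1 := (cy (c + 1)).1 hy1
          have h2 := (ypattern x y hxy (c + 1)).1 hy1
          rw [add_sub_cancel_right] at h1 h2
          exact iff_of_false h1.2 h2.2
        · have h1 : ¬ (c ∈ Set.range (sSeq μ) ∧ c + 1 ∉ Set.range (sSeq μ)) := by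
            intro h
            exact hx1 ((cx (c + 1)).2 ⟨by rw [add_sub_cancel_right]; exact h.1, h.2⟩)
          have h2 : ¬ (c + 1 ∈ Set.range (sSeq μ) ∧ c ∉ Set.range (sSeq μ)) := by
            intro h
            exact hy1 ((cy (c + 1)).2 ⟨h.1, by rw [add_sub_cancel_right]; exact h.2⟩)
          have h3 : ¬ (Hf x y (c + 1) < Hf x y c ∧
              ¬ Hf x y (c + 1 + 1) < Hf x y (c + 1)) := by
            intro h
            exact hx1 ((xpattern x y hxy (c + 1)).2 ⟨by rw [add_sub_cancel_right]; exact h.1, h.2⟩)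
          have h4 : ¬ (Hf x y (c + 1 + 1) < Hf x y (c + 1) ∧
              ¬ Hf x y (c + 1) < Hf x y c) := by
            intro h
            exact hy1 ((ypattern x y hxy (c + 1)).2 ⟨h.1, by rw [add_sub_cancel_right]; exact h.2⟩)
          tauto
  intro c
  rcases le_or_gt (x (Fin.last e)) c with h | h
  · exact iff_of_false (htop c h) (htopH c h)
  · have hn : c = x (Fin.last e) - (((x (Fin.last e) - c).toNat : ℕ) : ℤ) := by
      rw [Int.toNat_of_nonneg (by omega)]; ring
    rw [hn]
    exact main _

theorem mu0_bound (hsum : (∑ k, x k) - (∑ k, y k) = 0) (i j : ℕ)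
    (hij : (i : ℤ) < Hf x y ((j : ℤ) - (i : ℤ))) :
    i < (x (Fin.last e) - x 0).toNat ∧ j < (x (Fin.last e) - x 0).toNat := by
  have hxl0 : 0 ≤ x (Fin.last e) := by
    by_contra h
    have h1 := Hf_eq_zero x y hxy (c := -1) (by omega)
    have h2 := Hf_ge_neg x y hxy hsum (-1)
    omega
  have hx0 : x 0 ≤ x (Fin.last e) := (hxmono x y hxy).monotone (Fin.zero_le _)
  rcases lt_or_ge ((j : ℤ) - (i : ℤ)) (x 0) with h | h
  · exfalso
    rw [Hf_eq_lin x y hxy hsum (by omega)] at hij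
    omega
  · have hHle : Hf x y ((j : ℤ) - (i : ℤ)) ≤ Hf x y (x 0) := Hf_antitone x y hxy _ _ h
    rw [Hf_eq_lin x y hxy hsum le_rfl] at hHle
    have hj : (j : ℤ) - (i : ℤ) < x (Fin.last e) := by
      by_contra hcon
      rw [Hf_eq_zero x y hxy (by omega)] at hij
      omega
    omega

def mu0 (hsum : (∑ k, x k) - (∑ k, y k) = 0) : YoungDiagram where
  cells := ((Finset.range (x (Fin.last e) - x 0).toNat ×ˢ
      Finset.range (x (Fin.last e) - x 0).toNat).filter
      (fun p => (p.1 : ℤ) < Hf x y ((p.2 : ℤ) - (p.1 : ℤ))))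
  isLowerSet := by
    intro p q hle hp
    simp only [Finset.coe_filter, Set.mem_setOf_eq, Finset.mem_product,
      Finset.mem_range] at hp ⊢
    obtain ⟨⟨hp1, hp2⟩, hp3⟩ := hp
    have hle1 : q.1 ≤ p.1 := hle.1
    have hle2 : q.2 ≤ p.2 := hle.2
    have hq3 : (q.1 : ℤ) < Hf x y ((q.2 : ℤ) - (q.1 : ℤ)) := by
      have h1 := Hf_sub_le x y hxy ((p.2 : ℤ) - (p.1 : ℤ)) ((p.2 : ℤ) - (q.1 : ℤ)) (by omega)
      have h2 : Hf x y ((p.2 : ℤ) - (q.1 : ℤ)) ≤ Hf x y ((q.2 : ℤ) - (q.1 : ℤ)) :=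
        Hf_antitone x y hxy _ _ (by omega)
      omega
    have hb := mu0_bound x y hxy hsum q.1 q.2 hq3
    exact ⟨⟨hb.1, hb.2⟩, hq3⟩

theorem mem_mu0 (hsum : (∑ k, x k) - (∑ k, y k) = 0) (i j : ℕ) :
    (i, j) ∈ mu0 x y hxy hsum ↔ (i : ℤ) < Hf x y ((j : ℤ) - (i : ℤ)) := by
  constructor
  · intro h
    have := (Finset.mem_filter.1 h).2
    exact this
  · intro h
    have hb := mu0_bound x y hxy hsum i j h
    refine Finset.mem_filter.2 ⟨?_, h⟩
    exact Finset.mem_product.2 ⟨Finset.mem_range.2 hb.1, Finset.mem_range.2 hb.2⟩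

theorem mu0_sSeq_spec (hsum : (∑ k, x k) - (∑ k, y k) = 0) (i : ℕ) :
    Hf x y (sSeq (mu0 x y hxy hsum) i + 1) ≤ i ∧
      (i : ℤ) < Hf x y (sSeq (mu0 x y hxy hsum) i) := by
  set μ := mu0 x y hxy hsum with hμ
  set L := μ.rowLen i with hL
  have hnot : (i, L) ∉ μ := by rw [mem_iff_lt_rowLen]; omega
  have h1 : ¬ ((i : ℤ) < Hf x y ((L : ℤ) - (i : ℤ))) := fun h =>
    hnot ((mem_mu0 x y hxy hsum i L).2 h)
  have hs : sSeq μ i + 1 = (L : ℤ) - (i : ℤ) := by simp only [sSeq, ← hL]; ring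
  refine ⟨by rw [hs]; omega, ?_⟩
  rcases Nat.eq_zero_or_pos L with h0 | h0
  · have hss : sSeq μ i = -(i : ℤ) - 1 := by
      simp only [sSeq, ← hL, h0, Nat.cast_zero]; ring
    rw [hss]
    have := Hf_ge_neg x y hxy hsum (-(i : ℤ) - 1)
    omega
  · have hmem : (i, L - 1) ∈ μ := by rw [mem_iff_lt_rowLen]; omega
    have h2 := (mem_mu0 x y hxy hsum i (L - 1)).1 hmem
    have h3 : ((L - 1 : ℕ) : ℤ) - (i : ℤ) = sSeq μ i := by
      simp only [sSeq, ← hL]; omega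
    rwa [h3] at h2

theorem mu0_range (hsum : (∑ k, x k) - (∑ k, y k) = 0) (c : ℤ) :
    c ∈ Set.range (sSeq (mu0 x y hxy hsum)) ↔ Hf x y (c + 1) < Hf x y c := by
  constructor
  · rintro ⟨i, rfl⟩
    have := mu0_sSeq_spec x y hxy hsum i
    omega
  · intro h
    have hnn : 0 ≤ Hf x y (c + 1) := Hf_nonneg x y hxy _
    set i := (Hf x y (c + 1)).toNat with hidef
    have hic : (i : ℤ) = Hf x y (c + 1) := Int.toNat_of_nonneg hnn
    obtain ⟨h1, h2⟩ := mu0_sSeq_spec x y hxy hsum i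
    set s := sSeq (mu0 x y hxy hsum) i with hsdef
    have heq : s = c := by
      rcases lt_trichotomy s c with hlt | he | hgt
      · have := Hf_antitone x y hxy (s + 1) c (by omega)
        omega
      · exact he
      · have := Hf_antitone x y hxy (c + 1) s (by omega)
        omega
    exact ⟨i, heq⟩

end Interlacing

end Interlace


open Interlace

/-- Any pair of integer-valued interlacing sequences
`x_1 < y_1 < x_2 < ... < y_{d-1} < x_d` with center `0` (that is,
`(x_1 + ... + x_d) - (y_1 + ... + y_{d-1}) = 0`) arises from a unique Young diagram:
there is a unique Young diagram whose addable-cell contents are exactly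
`{x_1, ..., x_d}` and whose removable-cell contents are exactly `{y_1, ..., y_{d-1}}`. -/
theorem existsUnique_youngDiagram_of_interlacing (d : ℕ) (hd : 1 ≤ d)
    (x : Fin d → ℤ) (y : Fin (d - 1) → ℤ)
    (hinter : ∀ i : Fin (d - 1),
      x ⟨i.1, by have := i.isLt; omega⟩ < y i ∧
      y i < x ⟨i.1 + 1, by have := i.isLt; omega⟩)
    (hcenter : (∑ i, x i) - (∑ i, y i) = 0) :
    ∃! μ : YoungDiagram,
      cellContent '' {c : ℕ × ℕ | μ.IsAddable c} = Set.range x ∧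
      cellContent '' {c : ℕ × ℕ | μ.IsRemovable c} = Set.range y := by
  obtain ⟨e, rfl⟩ : ∃ e, d = e + 1 := ⟨d - 1, by omega⟩
  have hxy : ∀ k : Fin e, x k.castSucc < y k ∧ y k < x k.succ := fun k => hinter k
  have hsum : (∑ k, x k) - (∑ k, y k) = 0 := hcenter
  refine ⟨mu0 x y hxy hsum, ⟨?_, ?_⟩, ?_⟩
  · ext c
    rw [mem_addContents, mu0_range x y hxy hsum (c - 1), mu0_range x y hxy hsum c,
      sub_add_cancel, xpattern x y hxy c]
  · ext c
    rw [mem_remContents, mu0_range x y hxy hsum (c - 1), mu0_range x y hxy hsum c,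
      sub_add_cancel, ypattern x y hxy c]
  · rintro ν ⟨hA, hR⟩
    apply eq_of_sSeq_range_eq
    ext c
    rw [transfer x y hxy ν hA hR c, mu0_range x y hxy hsum c]
end

section
/- Let k ≤ n and let w ∈ S_n fix each of 1, ..., n−k pointwise. Let H ≤ S_n be the subgroup of permutations fixing each of n−k+1, ..., n (the standard copy of S_{n−k}), and let R ⊆ S_n be any complete set of representatives of the left cosets of H in S_n. Then in ℂ[S_n], Σ_{g ∈ R} g w g^{-1} = (z/(n−k)!) · Γ, where Γ is the sum of all permutations of S_n conjugate to w and z is the order of the centralizer of w in S_n. In particular, the left-hand side does not depend on the choice of R. -/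
/-!
Both sides, multiplied by `(n-k)!`, equal `∑_{g ∈ S_n} g w g⁻¹`. Elements of `H` move only
points that `w` fixes, so they commute with `w` and the summand is constant on the left cosets
`r H`, each of size `(n-k)!`; on the other hand every conjugate of `w` arises from exactly
`|C(w)|` elements `g`, namely a left coset of the centralizer.
-/

/-- The standard copy of `S_{n-k}` inside `S_n`: the subgroup of permutations fixing
each of `n-k+1, …, n` (with elements of `{1, …, n}` modelled as `Fin n`, these are
the positions with 0-indexed value `≥ n - k`). -/
def lastFixSubgroup (n k : ℕ) : Subgroup (Equiv.Perm (Fin n)) where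
  carrier := {σ : Equiv.Perm (Fin n) | ∀ a : Fin n, n - k ≤ (a : ℕ) → σ a = a}
  one_mem' := fun _ _ => rfl
  mul_mem' := by
    intro σ τ hσ hτ a ha
    simp only [Equiv.Perm.mul_apply, hτ a ha, hσ a ha]
  inv_mem' := by
    intro σ hσ a ha
    nth_rewrite 1 [← hσ a ha]
    exact σ.symm_apply_apply a

open Finset

section

variable {G M : Type*} [Group G] [AddCommMonoid M]

theorem Subgroup.isComplement_of_existsUnique_inv_mul_mem {R : Finset G} {H : Subgroup G}
    (hR : ∀ g, ∃! r, r ∈ R ∧ r⁻¹ * g ∈ H) : Subgroup.IsComplement (R : Set G) H :=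
  Subgroup.isComplement_iff_existsUnique_inv_mul_mem.mpr fun g =>
    let ⟨r, ⟨hr, hrg⟩, huniq⟩ := hR g
    ⟨⟨r, hr⟩, hrg, fun s hs => Subtype.ext (huniq s ⟨s.2, hs⟩)⟩

variable [Fintype G]

theorem sum_eq_card_smul_sum_of_isComplement {R : Finset G} {H : Subgroup G}
    (hRH : Subgroup.IsComplement (R : Set G) H) {f : G → M}
    (hf : ∀ g, ∀ h ∈ H, f (g * h) = f g) :
    ∑ g, f g = Nat.card H • ∑ r ∈ R, f r := by
  classical
  rw [← hRH.equiv.symm.sum_comp, Fintype.sum_prod_type, ← Finset.sum_coe_sort R,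
    Finset.smul_sum]
  refine Fintype.sum_congr _ _ fun r => ?_
  simp only [Subgroup.IsComplement.equiv_symm_apply]
  rw [Fintype.sum_congr _ _ fun h : (H : Set G) => hf r h h.2, Finset.sum_const,
    Finset.card_univ, ← Nat.card_eq_fintype_card]
  rfl

theorem sum_conj_eq_card_centralizer_smul_sum [DecidableEq G] (w : G) (F : G → M) :
    ∑ g, F (g * w * g⁻¹) =
      Nat.card (Subgroup.centralizer {w}) • ∑ x ∈ univ.filter (IsConj w), F x := by
  rw [Finset.sum_comp, Finset.smul_sum]
  have himage : univ.image (fun g => g * w * g⁻¹) = univ.filter (IsConj w) := by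
    ext x
    simp [isConj_iff]
  rw [himage]
  refine Finset.sum_congr rfl fun x hx => ?_
  obtain ⟨g₀, rfl⟩ := isConj_iff.mp (Finset.mem_filter.mp hx).2
  congr 1
  rw [← Fintype.card_subtype, ← Nat.card_eq_fintype_card]
  -- the fibre over `g₀ w g₀⁻¹` is the left coset `g₀ C(w)`
  refine Nat.card_congr ((Equiv.mulLeft g₀⁻¹).subtypeEquiv fun g => ?_)
  rw [Equiv.coe_mulLeft, Subgroup.mem_centralizer_singleton_iff, mul_inv_eq_iff_eq_mul,
    mul_assoc g₀⁻¹, inv_mul_eq_iff_eq_mul, mul_assoc, mul_assoc]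

end

theorem mem_lastFixSubgroup_iff {n k : ℕ} {σ : Equiv.Perm (Fin n)} :
    σ ∈ lastFixSubgroup n k ↔ ∀ a : Fin n, n - k ≤ (a : ℕ) → σ a = a := Iff.rfl

theorem card_lastFixSubgroup (n k : ℕ) : Nat.card (lastFixSubgroup n k) = (n - k).factorial := by
  classical
  have e : lastFixSubgroup n k ≃ Equiv.Perm {a : Fin n // (a : ℕ) < n - k} :=
    ((Equiv.refl _).subtypeEquiv fun σ => by
      simp only [Equiv.refl_apply, mem_lastFixSubgroup_iff, not_lt]).trans
      (Equiv.Perm.subtypeEquivSubtypePerm _).symm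
  rw [Nat.card_congr e, Nat.card_eq_fintype_card, Fintype.card_perm,
    Fintype.card_fin_lt_of_le (Nat.sub_le n k)]

theorem commute_of_mem_lastFixSubgroup {n k : ℕ} {w h : Equiv.Perm (Fin n)}
    (hw : ∀ a : Fin n, (a : ℕ) < n - k → w a = a) (hh : h ∈ lastFixSubgroup n k) :
    Commute w h :=
  Equiv.Perm.Disjoint.commute fun a =>
    (lt_or_ge (a : ℕ) (n - k)).imp (hw a) (hh a)

theorem sum_conj_over_cosetReps_general (n k : ℕ) (w : Equiv.Perm (Fin n))
    (hw : ∀ a : Fin n, (a : ℕ) < n - k → w a = a)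
    (R : Finset (Equiv.Perm (Fin n)))
    (hR : ∀ σ : Equiv.Perm (Fin n), ∃! r, r ∈ R ∧ r⁻¹ * σ ∈ lastFixSubgroup n k) :
    ∑ g ∈ R, MonoidAlgebra.of ℂ (Equiv.Perm (Fin n)) (g * w * g⁻¹)
      = ((Nat.card (Subgroup.centralizer ({w} : Set (Equiv.Perm (Fin n)))) : ℂ)
            / ((n - k).factorial : ℂ)) •
          ∑ g ∈ Finset.univ.filter (fun g : Equiv.Perm (Fin n) => IsConj w g),
            MonoidAlgebra.of ℂ (Equiv.Perm (Fin n)) g := by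
  classical
  set f := fun g : Equiv.Perm (Fin n) => MonoidAlgebra.of ℂ (Equiv.Perm (Fin n)) (g * w * g⁻¹)
  have hf : ∀ g, ∀ h ∈ lastFixSubgroup n k, f (g * h) = f g := fun g h hh => by
    have hconj : h * w * h⁻¹ = w := (commute_of_mem_lastFixSubgroup hw hh).symm.mul_inv_cancel
    calc f (g * h) = MonoidAlgebra.of ℂ _ (g * (h * w * h⁻¹) * g⁻¹) := by simp only [f]; group
      _ = f g := by rw [hconj]
  have hcosets : ∑ g, f g = (n - k).factorial • ∑ g ∈ R, f g := by
    rw [← card_lastFixSubgroup]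
    exact sum_eq_card_smul_sum_of_isComplement
      (Subgroup.isComplement_of_existsUnique_inv_mul_mem hR) hf
  have hclass :=
    sum_conj_eq_card_centralizer_smul_sum w (MonoidAlgebra.of ℂ (Equiv.Perm (Fin n)))
  have hfact : ((n - k).factorial : ℂ) ≠ 0 := Nat.cast_ne_zero.mpr (Nat.factorial_ne_zero _)
  rw [div_eq_inv_mul, mul_smul, eq_inv_smul_iff₀ hfact, Nat.cast_smul_eq_nsmul,
    Nat.cast_smul_eq_nsmul, ← hcosets, hclass]

/-- Let `k ≤ n`, let `w ∈ S_n` fix each of `1, …, n-k`, and let `R` be any complete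
set of representatives of the left cosets of the standard copy `H` of `S_{n-k}`
(fixing `n-k+1, …, n`) in `S_n`.  Then in `ℂ[S_n]`,
`Σ_{g ∈ R} g w g⁻¹ = (z/(n-k)!) · Γ`, where `Γ` is the sum of all permutations
conjugate to `w` and `z` is the order of the centralizer of `w` in `S_n`. -/
theorem sum_conj_over_cosetReps (n k : ℕ) (hkn : k ≤ n) (w : Equiv.Perm (Fin n))
    (hw : ∀ a : Fin n, (a : ℕ) < n - k → w a = a)
    (R : Finset (Equiv.Perm (Fin n)))
    (hR : ∀ σ : Equiv.Perm (Fin n), ∃! r, r ∈ R ∧ r⁻¹ * σ ∈ lastFixSubgroup n k) :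
    ∑ g ∈ R, MonoidAlgebra.of ℂ (Equiv.Perm (Fin n)) (g * w * g⁻¹)
      = ((Nat.card (Subgroup.centralizer ({w} : Set (Equiv.Perm (Fin n)))) : ℂ)
            / ((n - k).factorial : ℂ)) •
          ∑ g ∈ Finset.univ.filter (fun g : Equiv.Perm (Fin n) => IsConj w g),
            MonoidAlgebra.of ℂ (Equiv.Perm (Fin n)) g :=
  sum_conj_over_cosetReps_general n k w hw R hR
end

section
/- Let k ≤ n and let w ∈ S_n fix each of 1, ..., n−k pointwise. Let H ≤ S_n be the subgroup of permutations fixing each of n−k+1, ..., n (the standard copy of S_{n−k}), and let R ⊆ S_n be any complete set of representatives of the left cosets of H in S_n. Then the element Σ_{g ∈ R} g w g^{-1} of ℂ[S_n] lies in the center of ℂ[S_n]. -/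
open Subgroup

namespace Subgroup.IsComplement

variable {G M : Type*} [Group G] [AddCommMonoid M] {H : Subgroup G} {R : Finset G}

theorem finset_sum_eq_finsum_quotient (hR : IsComplement (R : Set G) H) (φ : G ⧸ H → M) :
    ∑ g ∈ R, φ g = ∑ᶠ q : G ⧸ H, φ q := by
  rw [← finsum_comp_equiv hR.leftQuotientEquiv.symm, finsum_eq_sum_of_fintype,
    ← Finset.sum_coe_sort R]
  rfl

theorem finset_sum_comp_mul_left (hR : IsComplement (R : Set G) H) (φ : G → M)
    (hφ : ∀ g, ∀ h ∈ H, φ (g * h) = φ g) (s : G) :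
    ∑ g ∈ R, φ (s * g) = ∑ g ∈ R, φ g := by
  let ψ : G ⧸ H → M := Quotient.lift φ fun a b hab => by
    rw [← mul_inv_cancel_left a b, hφ a _ (QuotientGroup.leftRel_apply.mp hab)]
  change ∑ g ∈ R, ψ (s • (g : G ⧸ H)) = ∑ g ∈ R, ψ g
  rw [finset_sum_eq_finsum_quotient hR (fun q => ψ (s • q)), finset_sum_eq_finsum_quotient hR]
  exact finsum_comp_equiv (MulAction.toPerm s)

end Subgroup.IsComplement

theorem Subgroup.isComplement_of_existsUnique_mem_inv_mul_mem {G : Type*} [Group G]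
    {H : Subgroup G} {R : Finset G} (hR : ∀ σ : G, ∃! r, r ∈ R ∧ r⁻¹ * σ ∈ H) :
    IsComplement (R : Set G) H :=
  isComplement_iff_existsUnique_inv_mul_mem.mpr fun σ =>
    let ⟨r, ⟨hr, hrH⟩, huniq⟩ := hR σ
    ⟨⟨r, hr⟩, hrH, fun s hs => Subtype.ext (huniq s ⟨s.2, hs⟩)⟩

theorem conj_mul_right_eq_of_mem_centralizer {G : Type*} [Group G] {H : Subgroup G} {w : G}
    (hw : w ∈ centralizer H) (g : G) {h : G} (hh : h ∈ H) :
    g * h * w * (g * h)⁻¹ = g * w * g⁻¹ := by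
  rw [mul_assoc g h, mem_centralizer_iff.mp hw h hh]
  group

namespace MonoidAlgebra

variable {k G : Type*} [CommSemiring k] [Group G]

theorem mem_center_of_forall_of_mul_eq {x : MonoidAlgebra k G}
    (hx : ∀ s : G, of k G s * x = x * of k G s) : x ∈ Subalgebra.center k (MonoidAlgebra k G) := by
  rw [Subalgebra.mem_center_iff]
  intro b
  induction b using MonoidAlgebra.induction_on with
  | of s => exact hx s
  | add a b ha hb => rw [add_mul, mul_add, ha, hb]
  | smul r a ha => rw [smul_mul_assoc, mul_smul_comm, ha]

theorem sum_conj_mem_center_of_isComplement {H : Subgroup G} {R : Finset G}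
    (hR : IsComplement (R : Set G) H) {w : G} (hw : w ∈ centralizer H) :
    ∑ g ∈ R, of k G (g * w * g⁻¹) ∈ Subalgebra.center k (MonoidAlgebra k G) := by
  refine mem_center_of_forall_of_mul_eq fun s => ?_
  have hconj : ∀ g, s * (g * w * g⁻¹) = (s * g) * w * (s * g)⁻¹ * s := fun g => by group
  calc of k G s * ∑ g ∈ R, of k G (g * w * g⁻¹)
      = (∑ g ∈ R, of k G ((s * g) * w * (s * g)⁻¹)) * of k G s := by
        simp only [Finset.mul_sum, Finset.sum_mul, ← map_mul, hconj]
    _ = (∑ g ∈ R, of k G (g * w * g⁻¹)) * of k G s := by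
        rw [hR.finset_sum_comp_mul_left (fun g => of k G (g * w * g⁻¹))
          (fun g h hh => by rw [conj_mul_right_eq_of_mem_centralizer hw g hh]) s]

end MonoidAlgebra

theorem mem_centralizer_lastFixSubgroup {n k : ℕ} {w : Equiv.Perm (Fin n)}
    (hw : ∀ a : Fin n, (a : ℕ) < n - k → w a = a) : w ∈ centralizer (lastFixSubgroup n k) :=
  mem_centralizer_iff.mpr fun _ hh =>
    Equiv.Perm.Disjoint.commute fun a => (lt_or_ge (a : ℕ) (n - k)).symm.imp (hh a) (hw a)

theorem sum_conj_over_cosetReps_mem_center_general (n k : ℕ)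
    (w : Equiv.Perm (Fin n))
    (hw : ∀ a : Fin n, (a : ℕ) < n - k → w a = a)
    (R : Finset (Equiv.Perm (Fin n)))
    (hR : ∀ σ : Equiv.Perm (Fin n), ∃! r, r ∈ R ∧ r⁻¹ * σ ∈ lastFixSubgroup n k) :
    (∑ g ∈ R, MonoidAlgebra.of ℂ (Equiv.Perm (Fin n)) (g * w * g⁻¹))
      ∈ Subalgebra.center ℂ (MonoidAlgebra ℂ (Equiv.Perm (Fin n))) :=
  MonoidAlgebra.sum_conj_mem_center_of_isComplement
    (isComplement_of_existsUnique_mem_inv_mul_mem hR) (mem_centralizer_lastFixSubgroup hw)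

/-- Let `k ≤ n`, let `w ∈ S_n` fix each of `1, …, n-k`, and let `R` be any complete
set of representatives of the left cosets of the standard copy `H` of `S_{n-k}`
(fixing `n-k+1, …, n`) in `S_n`.  Then `Σ_{g ∈ R} g w g⁻¹` lies in the center of
the group algebra `ℂ[S_n]`. -/
theorem sum_conj_over_cosetReps_mem_center (n k : ℕ) (hkn : k ≤ n)
    (w : Equiv.Perm (Fin n))
    (hw : ∀ a : Fin n, (a : ℕ) < n - k → w a = a)
    (R : Finset (Equiv.Perm (Fin n)))
    (hR : ∀ σ : Equiv.Perm (Fin n), ∃! r, r ∈ R ∧ r⁻¹ * σ ∈ lastFixSubgroup n k) :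
    (∑ g ∈ R, MonoidAlgebra.of ℂ (Equiv.Perm (Fin n)) (g * w * g⁻¹))
      ∈ Subalgebra.center ℂ (MonoidAlgebra ℂ (Equiv.Perm (Fin n))) :=
  sum_conj_over_cosetReps_mem_center_general n k w hw R hR
end

section
/- Let G be a finite group and V a finite-dimensional irreducible complex representation of G with character χ, extended ℂ-linearly to the group algebra ℂ[G]. Then the map z ↦ χ(z)/χ(1) restricted to the center of ℂ[G] is a ℂ-algebra homomorphism; equivalently, for all z, w in the center of ℂ[G], χ(z·w)·χ(1) = χ(z)·χ(w). -/
/-!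
By Schur's lemma a central element `z` of `ℂ[G]` acts on the irreducible representation `V`
as a scalar `c z`: the action commutes with every `ρ g`, so any eigenspace of it is a nonzero
`G`-invariant subspace, hence all of `V`. Then `χ z = c z · dim V`, and `c` is multiplicative.
-/

namespace Representation

variable {k G V : Type*} [CommRing k] [Monoid G] [AddCommGroup V] [Module k V]
  (ρ : Representation k G V)

theorem trace_asAlgebraHom (u : MonoidAlgebra k G) :
    LinearMap.trace k V (ρ.asAlgebraHom u) =
      u.coeff.sum fun g a => a * LinearMap.trace k V (ρ g) := by
  conv_lhs => rw [← MonoidAlgebra.sum_coeff_single u]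
  rw [map_finsuppSum, map_finsuppSum]
  refine Finsupp.sum_congr fun g _ => ?_
  rw [asAlgebraHom_single, map_smul, smul_eq_mul]

theorem commute_asAlgebraHom_of_mem_center {u : MonoidAlgebra k G}
    (hu : u ∈ Subalgebra.center k (MonoidAlgebra k G)) (g : G) :
    Commute (ρ.asAlgebraHom u) (ρ g) := by
  have hcomm : Commute u (MonoidAlgebra.single g 1) :=
    (Subalgebra.mem_center_iff.mp hu _).symm
  simpa only [asAlgebraHom_single_one] using hcomm.map ρ.asAlgebraHom

end Representation

section Schur

variable {k G V : Type*} [Field k] [IsAlgClosed k] [Monoid G] [AddCommGroup V] [Module k V]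
  [FiniteDimensional k V] [Nontrivial V]

theorem Representation.exists_eq_smul_one_of_commute {ρ : Representation k G V}
    (hirr : ∀ p : Submodule k V, (∀ g : G, ∀ x ∈ p, ρ g x ∈ p) → p = ⊥ ∨ p = ⊤)
    {T : Module.End k V} (hT : ∀ g : G, Commute T (ρ g)) :
    ∃ c : k, T = c • 1 := by
  obtain ⟨c, hc⟩ := Module.End.exists_eigenvalue T
  have hinv : ∀ g : G, ∀ x ∈ T.eigenspace c, ρ g x ∈ T.eigenspace c := by
    intro g x hx
    rw [Module.End.mem_eigenspace_iff] at hx ⊢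
    rw [← Module.End.mul_apply, (hT g).eq, Module.End.mul_apply, hx, map_smul]
  obtain hbot | htop := hirr _ hinv
  · exact absurd hbot hc
  · refine ⟨c, LinearMap.ext fun x => ?_⟩
    exact Module.End.mem_eigenspace_iff.mp (htop ▸ Submodule.mem_top)

theorem Representation.exists_asAlgebraHom_eq_smul_one_of_mem_center
    {ρ : Representation k G V}
    (hirr : ∀ p : Submodule k V, (∀ g : G, ∀ x ∈ p, ρ g x ∈ p) → p = ⊥ ∨ p = ⊤)
    {u : MonoidAlgebra k G} (hu : u ∈ Subalgebra.center k (MonoidAlgebra k G)) :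
    ∃ c : k, ρ.asAlgebraHom u = c • 1 :=
  exists_eq_smul_one_of_commute hirr (ρ.commute_asAlgebraHom_of_mem_center hu)

end Schur

theorem normalized_character_multiplicative_on_center_general
    {G : Type*} [Group G]
    {V : Type*} [AddCommGroup V] [Module ℂ V] [FiniteDimensional ℂ V]
    (ρ : Representation ℂ G V) (hV : Nontrivial V)
    (hirr : ∀ p : Submodule ℂ V, (∀ g : G, ∀ x ∈ p, ρ g x ∈ p) → p = ⊥ ∨ p = ⊤)
    (χ : MonoidAlgebra ℂ G → ℂ)
    (hχ : ∀ z : MonoidAlgebra ℂ G,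
      χ z = z.coeff.sum fun g a => a * LinearMap.trace ℂ V (ρ g)) :
    ∀ z w : MonoidAlgebra ℂ G,
      z ∈ Subalgebra.center ℂ (MonoidAlgebra ℂ G) →
      w ∈ Subalgebra.center ℂ (MonoidAlgebra ℂ G) →
      χ (z * w) * χ 1 = χ z * χ w := by
  intro z w hz hw
  have hχ_trace (u : MonoidAlgebra ℂ G) : χ u = LinearMap.trace ℂ V (ρ.asAlgebraHom u) := by
    rw [hχ, ρ.trace_asAlgebraHom]
  obtain ⟨c, hc⟩ := ρ.exists_asAlgebraHom_eq_smul_one_of_mem_center hirr hz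
  obtain ⟨d, hd⟩ := ρ.exists_asAlgebraHom_eq_smul_one_of_mem_center hirr hw
  have hzw : ρ.asAlgebraHom (z * w) = (c * d) • 1 := by
    rw [map_mul, hc, hd, smul_mul_smul_comm, one_mul]
  simp only [hχ_trace, hzw, hc, hd, map_one, map_smul, smul_eq_mul]
  ring

/-- Let `G` be a finite group and `V` a finite-dimensional irreducible complex
representation of `G` (irreducible: `V ≠ 0` and the only `G`-invariant subspaces are
`⊥` and `⊤`, i.e. `V` is a simple `ℂ[G]`-module), with character `χ` extended
`ℂ`-linearly to the group algebra `ℂ[G]`.  Then the normalized character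
`z ↦ χ(z)/χ(1)` is an algebra homomorphism on the center of `ℂ[G]`; equivalently,
for all `z, w` in the center of `ℂ[G]`, `χ(z·w)·χ(1) = χ(z)·χ(w)`. -/
theorem normalized_character_multiplicative_on_center
    {G : Type*} [Group G] [Fintype G]
    {V : Type*} [AddCommGroup V] [Module ℂ V] [FiniteDimensional ℂ V]
    (ρ : Representation ℂ G V) (hV : Nontrivial V)
    (hirr : ∀ p : Submodule ℂ V, (∀ g : G, ∀ x ∈ p, ρ g x ∈ p) → p = ⊥ ∨ p = ⊤)
    (χ : MonoidAlgebra ℂ G → ℂ)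
    (hχ : ∀ z : MonoidAlgebra ℂ G,
      χ z = z.coeff.sum fun g a => a * LinearMap.trace ℂ V (ρ g)) :
    ∀ z w : MonoidAlgebra ℂ G,
      z ∈ Subalgebra.center ℂ (MonoidAlgebra ℂ G) →
      w ∈ Subalgebra.center ℂ (MonoidAlgebra ℂ G) →
      χ (z * w) * χ 1 = χ z * χ w :=
  normalized_character_multiplicative_on_center_general ρ hV hirr χ hχ
end

section
/- Fix n ≥ 0, embed S_n into S_{n+1} as the permutations fixing n+1, and let pr_n : ℂ[S_{n+1}] → ℂ[S_n] be the ℂ-linear map defined on group elements by pr_n(g) = g (regarded as an element of S_n) if g(n+1) = n+1, and pr_n(g) = 0 otherwise. Then for every k ≥ 0, the element pr_n(X_{n+1}^k) lies in the center of ℂ[S_n], where X_{n+1} = Σ_{i=1}^{n} (i, n+1) is the Jucys–Murphy element of ℂ[S_{n+1}]. -/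
/-! Conjugation by a permutation `σ ∈ S_n ⊆ S_{n+1}` permutes the transpositions `(i, n+1)`, so
`X_{n+1}` and its powers commute with `S_n`. The projection `pr_n` is an `S_n`-bimodule map,
`pr_n(σ x τ) = σ pr_n(x) τ`, hence it sends elements commuting with `S_n` to elements commuting
with `S_n`, i.e. to the center of `ℂ[S_n]`. -/

/-- A permutation of `{1, …, n+1}` fixing `n+1`, regarded as a permutation of
`{1, …, n}`. -/
def restrictLast {n : ℕ} (g : Equiv.Perm (Fin (n + 1)))
    (hg : g (Fin.last n) = Fin.last n) : Equiv.Perm (Fin n) where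
  toFun i := Fin.castPred (g i.castSucc)
    (fun h => (Fin.castSucc_lt_last i).ne (g.injective (h.trans hg.symm)))
  invFun i := Fin.castPred (g⁻¹ i.castSucc)
    (fun h => (Fin.castSucc_lt_last i).ne (by
      have h' := congrArg g h
      rwa [Equiv.Perm.coe_inv, Equiv.apply_symm_apply, hg] at h'))
  left_inv i := by
    simp [Fin.castSucc_castPred]
  right_inv i := by
    simp [Fin.castSucc_castPred]

/-- The `ℂ`-linear map `pr_n : ℂ[S_{n+1}] → ℂ[S_n]` defined on group elements by
`pr_n(g) = g` (regarded as an element of `S_n`) if `g(n+1) = n+1` and `pr_n(g) = 0`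
otherwise. -/
noncomputable def prLast (n : ℕ) (x : MonoidAlgebra ℂ (Equiv.Perm (Fin (n + 1)))) :
    MonoidAlgebra ℂ (Equiv.Perm (Fin n)) :=
  x.coeff.sum fun g a =>
    if hg : g (Fin.last n) = Fin.last n
    then MonoidAlgebra.single (restrictLast g hg) a
    else 0

open Equiv MonoidAlgebra

theorem MonoidAlgebra.mem_center_of_forall_commute_of {k G : Type*} [CommSemiring k] [Monoid G]
    {z : MonoidAlgebra k G} (h : ∀ g, Commute (of k G g) z) :
    z ∈ Subalgebra.center k (MonoidAlgebra k G) := by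
  rw [Subalgebra.mem_center_iff]
  intro b
  induction b using MonoidAlgebra.induction_on with
  | of g => exact h g
  | add x y hx hy => exact Commute.add_left hx hy
  | smul r x hx => exact Commute.smul_left hx r

section Perm

variable {n : ℕ}

theorem castSucc_restrictLast (g : Perm (Fin (n + 1))) (hg : g (Fin.last n) = Fin.last n)
    (i : Fin n) : (restrictLast g hg i).castSucc = g i.castSucc :=
  Fin.castSucc_castPred _ fun h => (Fin.castSucc_lt_last i).ne (g.injective (h.trans hg.symm))

theorem restrictLast_mul (g h : Perm (Fin (n + 1)))
    (hg : g (Fin.last n) = Fin.last n) (hh : h (Fin.last n) = Fin.last n) :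
    restrictLast (g * h) (by rw [Perm.mul_apply, hh, hg]) =
      restrictLast g hg * restrictLast h hh :=
  Equiv.ext fun i => Fin.castSucc_injective _ <| by
    simp only [Perm.mul_apply, castSucc_restrictLast]

noncomputable def liftPerm (σ : Perm (Fin n)) : Perm (Fin (n + 1)) :=
  σ.viaEmbedding Fin.castSuccEmb

theorem liftPerm_castSucc (σ : Perm (Fin n)) (i : Fin n) :
    liftPerm σ i.castSucc = (σ i).castSucc :=
  σ.viaEmbedding_apply Fin.castSuccEmb i

theorem liftPerm_last (σ : Perm (Fin n)) : liftPerm σ (Fin.last n) = Fin.last n :=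
  σ.viaEmbedding_apply_of_notMem _ _ fun ⟨i, hi⟩ => (Fin.castSucc_lt_last i).ne hi

theorem restrictLast_liftPerm (σ : Perm (Fin n)) :
    restrictLast (liftPerm σ) (liftPerm_last σ) = σ :=
  Equiv.ext fun i => Fin.castSucc_injective _ <| by
    rw [castSucc_restrictLast, liftPerm_castSucc]

theorem liftPerm_mul_apply_last_eq_last_iff (σ : Perm (Fin n)) (g : Perm (Fin (n + 1))) :
    (liftPerm σ * g) (Fin.last n) = Fin.last n ↔ g (Fin.last n) = Fin.last n := by
  rw [Perm.mul_apply]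
  exact (liftPerm σ).injective.eq_iff' (liftPerm_last σ)

theorem mul_liftPerm_apply_last (σ : Perm (Fin n)) (g : Perm (Fin (n + 1))) :
    (g * liftPerm σ) (Fin.last n) = g (Fin.last n) := by
  rw [Perm.mul_apply, liftPerm_last]

end Perm

section Projection

variable {n : ℕ}

theorem prLast_single (g : Perm (Fin (n + 1))) (a : ℂ) :
    prLast n (single g a) =
      if hg : g (Fin.last n) = Fin.last n then single (restrictLast g hg) a else 0 := by
  rw [prLast, coeff_single, Finsupp.sum_single_index]
  split <;> simp

theorem prLast_zero : prLast n 0 = 0 := by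
  simp [prLast]

theorem prLast_add (x y : MonoidAlgebra ℂ (Perm (Fin (n + 1)))) :
    prLast n (x + y) = prLast n x + prLast n y := by
  simp only [prLast, coeff_add]
  refine Finsupp.sum_add_index' (fun g => ?_) fun g a b => ?_ <;> split <;> simp [single_add]

theorem prLast_of_liftPerm_mul (σ : Perm (Fin n)) (x : MonoidAlgebra ℂ (Perm (Fin (n + 1)))) :
    prLast n (of ℂ _ (liftPerm σ) * x) = of ℂ _ σ * prLast n x := by
  induction x using MonoidAlgebra.induction_linear with
  | zero => rw [mul_zero, prLast_zero, mul_zero]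
  | add x y hx hy => rw [mul_add, prLast_add, prLast_add, hx, hy, mul_add]
  | single g a =>
    rw [of_apply, single_mul_single, one_mul, prLast_single, prLast_single]
    by_cases hg : g (Fin.last n) = Fin.last n
    · rw [dif_pos hg, dif_pos ((liftPerm_mul_apply_last_eq_last_iff σ g).2 hg),
        restrictLast_mul _ _ (liftPerm_last σ) hg, restrictLast_liftPerm, of_apply,
        single_mul_single, one_mul]
    · rw [dif_neg hg, dif_neg (mt (liftPerm_mul_apply_last_eq_last_iff σ g).1 hg), mul_zero]

theorem prLast_mul_of_liftPerm (σ : Perm (Fin n)) (x : MonoidAlgebra ℂ (Perm (Fin (n + 1)))) :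
    prLast n (x * of ℂ _ (liftPerm σ)) = prLast n x * of ℂ _ σ := by
  induction x using MonoidAlgebra.induction_linear with
  | zero => rw [zero_mul, prLast_zero, zero_mul]
  | add x y hx hy => rw [add_mul, prLast_add, prLast_add, hx, hy, add_mul]
  | single g a =>
    rw [of_apply, single_mul_single, mul_one, prLast_single, prLast_single]
    by_cases hg : g (Fin.last n) = Fin.last n
    · rw [dif_pos hg, dif_pos ((mul_liftPerm_apply_last σ g).trans hg),
        restrictLast_mul _ _ hg (liftPerm_last σ), restrictLast_liftPerm, of_apply,
        single_mul_single, mul_one]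
    · rw [dif_neg hg, dif_neg ((mul_liftPerm_apply_last σ g).trans_ne hg), zero_mul]

theorem prLast_mem_center_of_forall_commute {x : MonoidAlgebra ℂ (Perm (Fin (n + 1)))}
    (hx : ∀ σ, Commute (of ℂ _ (liftPerm σ)) x) :
    prLast n x ∈ Subalgebra.center ℂ (MonoidAlgebra ℂ (Perm (Fin n))) :=
  mem_center_of_forall_commute_of fun σ => by
    rw [Commute, SemiconjBy, ← prLast_of_liftPerm_mul, (hx σ).eq, prLast_mul_of_liftPerm]

end Projection

noncomputable def jucysMurphy (k : Type*) [Semiring k] (n : ℕ) :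
    MonoidAlgebra k (Perm (Fin (n + 1))) :=
  ∑ i : Fin n, of k _ (swap i.castSucc (Fin.last n))

theorem commute_of_liftPerm_jucysMurphy {k : Type*} [Semiring k] {n : ℕ} (σ : Perm (Fin n)) :
    Commute (of k _ (liftPerm σ)) (jucysMurphy k n) := by
  rw [Commute, SemiconjBy, jucysMurphy, Finset.mul_sum, Finset.sum_mul]
  simp only [← map_mul, mul_swap_eq_swap_mul, liftPerm_castSucc, liftPerm_last]
  exact Fintype.sum_equiv σ _ _ fun i => rfl

/-- For every `k ≥ 0`, the element `pr_n(X_{n+1}^k)` lies in the center of `ℂ[S_n]`,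
where `X_{n+1} = Σ_{i=1}^{n} (i, n+1)` is the Jucys–Murphy element of `ℂ[S_{n+1}]`. -/
theorem prLast_jucysMurphy_pow_mem_center (n k : ℕ) :
    prLast n ((∑ i : Fin n, MonoidAlgebra.of ℂ (Equiv.Perm (Fin (n + 1)))
          (Equiv.swap i.castSucc (Fin.last n))) ^ k)
      ∈ Subalgebra.center ℂ (MonoidAlgebra ℂ (Equiv.Perm (Fin n))) :=
  prLast_mem_center_of_forall_commute fun σ => (commute_of_liftPerm_jucysMurphy σ).pow_right k
end
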